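/- arXiv:1103.5622 — 2 statements merged into one kernel-verified Lean document; each statement's English description precedes it below -/
import Mathlib

section
/- Let Γ be a finitely generated group, H ⊴ Γ a finitely generated normal subgroup, and α an endomorphism of Γ with α(H) ⊆ H. Then GR(α) ≤ max{ GR(α restricted to H), GR(induced endomorphism on Γ/H) }, where growth rates are computed with respect to finite generating sets: a finite generating set T of H together with coset representatives g₁,…,g_k whose images generate Γ/H, with T ∪ {g₁,…,g_k} generating Γ. -/
/-!
Fix `ρ > max LH LQ` and a period `N` with `C(N) < ρ^N` and `B(Nm) ≤ ρ^(Nm)` for all `m`, where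
`B` and `C` are the growth functions on `H` and on `Γ/H`. Lifting a shortest word for `ᾱ^N(ḡᵢ)`
writes `α^N(gᵢ) = uᵢ vᵢ`, with `uᵢ` a word of length `C(N)` in the `gⱼ` and `vᵢ ∈ H` of bounded
`T`-length `K`. Applying `α^(Nm)` shows that the `S`-lengths `aₘ` of the `α^(Nm)(gᵢ)` satisfy
`aₘ₊₁ ≤ C(N) aₘ + K B(Nm)`, and since `C(N) < ρ^N` this recursion gives `aₘ = O(ρ^(Nm))`.
Hence the growth rate of `α` is at most `ρ`.
-/
open Filter

/-- Word length of `g` with respect to `S ∪ S⁻¹`. -/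
noncomputable def wordLength {G : Type*} [Group G] (S : Set G) (g : G) : ℕ :=
  sInf {n | ∃ l : List G, l.length = n ∧ (∀ x ∈ l, x ∈ S ∨ x⁻¹ ∈ S) ∧ l.prod = g}

open scoped Pointwise

theorem Set.mem_insert_one_pow_iff {M : Type*} [Monoid M] {s : Set M} {a : M} {n : ℕ} :
    a ∈ insert 1 s ^ n ↔ ∃ l : List M, l.length ≤ n ∧ (∀ x ∈ l, x ∈ s) ∧ l.prod = a := by
  induction n generalizing a with
  | zero => simp [eq_comm]
  | succ n ih =>
    rw [pow_succ', Set.mem_mul]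
    constructor
    · rintro ⟨x, rfl | hx, b, hb, rfl⟩
      · obtain ⟨l, hl, hls, rfl⟩ := ih.1 hb
        exact ⟨l, by omega, hls, (one_mul _).symm⟩
      · obtain ⟨l, hl, hls, rfl⟩ := ih.1 hb
        exact ⟨x :: l, by simpa using hl, by simpa [hx] using hls, rfl⟩
    · rintro ⟨_ | ⟨x, l⟩, hl, hls, rfl⟩
      · exact ⟨1, Set.mem_insert _ _, 1, ih.2 ⟨[], by simp, by simp, rfl⟩, one_mul _⟩
      · refine ⟨x, Or.inr (hls x List.mem_cons_self), l.prod, ih.2 ⟨l, by simpa using hl,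
          fun y hy => hls y (List.mem_cons_of_mem _ hy), rfl⟩, rfl⟩

section WordBall

variable {G G' : Type*} [Group G] [Group G'] {S S' : Set G} {a : G} {m n : ℕ}

def wordBall (S : Set G) (n : ℕ) : Set G := insert 1 (S ∪ S⁻¹) ^ n

theorem mem_wordBall_iff :
    a ∈ wordBall S n ↔ ∃ l : List G, l.length ≤ n ∧ (∀ x ∈ l, x ∈ S ∨ x⁻¹ ∈ S) ∧ l.prod = a :=
  Set.mem_insert_one_pow_iff

theorem wordBall_mono (hSS' : S ⊆ S') (hmn : m ≤ n) : wordBall S m ⊆ wordBall S' n :=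
  Set.pow_subset_pow (Set.insert_subset_insert (Set.union_subset_union hSS'
    (Set.inv_subset_inv.2 hSS'))) (Set.mem_insert _ _) hmn

theorem subset_wordBall_one : S ⊆ wordBall S 1 := by
  rw [wordBall, pow_one]
  exact Set.subset_union_left.trans (Set.subset_insert _ _)

theorem wordBall_add : wordBall S (m + n) = wordBall S m * wordBall S n := pow_add _ _ _

theorem inv_wordBall : (wordBall S n)⁻¹ = wordBall S n := by
  rw [wordBall, ← inv_pow, Set.inv_insert, inv_one, Set.union_inv, inv_inv, Set.union_comm]

theorem image_wordBall {F : Type*} [FunLike F G G'] [MonoidHomClass F G G'] (f : F) :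
    f '' wordBall S n = wordBall (f '' S) n := by
  rw [wordBall, Set.image_pow, Set.image_insert_eq, map_one, Set.image_union, Set.image_inv,
    wordBall]

theorem wordBall_subset_wordBall_mul {c : ℕ} (h : S ⊆ wordBall S' c) :
    wordBall S n ⊆ wordBall S' (c * n) := by
  have h' : S⁻¹ ⊆ wordBall S' c := inv_wordBall (S := S') ▸ Set.inv_subset_inv.2 h
  rw [wordBall, wordBall, pow_mul]
  exact Set.pow_subset_pow_left
    (Set.insert_subset (Set.one_mem_pow (Set.mem_insert _ _)) (Set.union_subset h h'))

theorem wordLength_le_of_mem_wordBall (h : a ∈ wordBall S n) : wordLength S a ≤ n := by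
  obtain ⟨l, hl, hlS, rfl⟩ := mem_wordBall_iff.1 h
  exact (Nat.sInf_le (by exact ⟨l, rfl, hlS, rfl⟩)).trans hl

theorem mem_wordBall_wordLength (ha : a ∈ Subgroup.closure S) :
    a ∈ wordBall S (wordLength S a) := by
  rw [← Subgroup.mem_toSubmonoid, Subgroup.closure_toSubmonoid] at ha
  obtain ⟨l, hlS, rfl⟩ := Submonoid.exists_list_of_mem_closure ha
  obtain ⟨l', hl', hl'S, hl'l⟩ := Nat.sInf_mem (s := {n | ∃ l' : List G, l'.length = n ∧
    (∀ x ∈ l', x ∈ S ∨ x⁻¹ ∈ S) ∧ l'.prod = l.prod}) ⟨l.length, l, rfl, hlS, rfl⟩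
  exact mem_wordBall_iff.2 ⟨l', hl'.le, hl'S, hl'l⟩

theorem sup_wordLength_le {ι : Type*} {X : Finset ι} {F : ι → G}
    (h : ∀ x ∈ X, F x ∈ wordBall S n) : X.sup (fun x => wordLength S (F x)) ≤ n :=
  Finset.sup_le fun x hx => wordLength_le_of_mem_wordBall (h x hx)

theorem mem_wordBall_sup_wordLength {ι : Type*} {X : Finset ι} {F : ι → G}
    (hF : ∀ x ∈ X, F x ∈ Subgroup.closure S) {x : ι} (hx : x ∈ X) :
    F x ∈ wordBall S (X.sup fun x => wordLength S (F x)) :=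
  wordBall_mono le_rfl (Finset.le_sup (f := fun x => wordLength S (F x)) hx)
    (mem_wordBall_wordLength (hF x hx))

theorem exists_forall_mem_wordBall_mul_wordBall {ι : Type*} [Finite ι] {H : Subgroup G}
    [H.Normal] {T X : Set G} (hT : Subgroup.closure T = H) {x : ι → G}
    (hx : ∀ i, (x i : G ⧸ H) ∈ wordBall ((↑) '' X) n) :
    ∃ K, ∀ i, x i ∈ wordBall X n * wordBall T K := by
  refine (eventually_all.2 fun i => ?_).exists (f := atTop)
  obtain ⟨u, hu, hux⟩ := (image_wordBall (QuotientGroup.mk' H)).symm ▸ hx i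
  have hv : u⁻¹ * x i ∈ Subgroup.closure T := hT ▸ QuotientGroup.eq.1 hux
  filter_upwards [eventually_ge_atTop (wordLength T (u⁻¹ * x i))] with K hK
  exact ⟨u, hu, _, wordBall_mono le_rfl hK (mem_wordBall_wordLength hv),
    mul_inv_cancel_left u _⟩

theorem iterate_mem_wordBall_sup_wordLength (f : G →* G) {X : Finset G}
    (hf : Set.MapsTo f (Subgroup.closure (X : Set G)) (Subgroup.closure (X : Set G))) (j : ℕ) :
    ∀ x ∈ (X : Set G), (⇑f)^[j] x ∈
      wordBall (X : Set G) (X.sup fun x => wordLength (X : Set G) ((⇑f)^[j] x)) :=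
  fun _ hx => mem_wordBall_sup_wordLength
    (fun _ hx => hf.iterate j (Subgroup.subset_closure hx)) hx

end WordBall

def growthBound (c K : ℕ) (b : ℕ → ℕ) : ℕ → ℕ
  | 0 => 1
  | m + 1 => growthBound c K b m * c + b m * K

section Iterate

variable {G : Type*} [Group G] {ι : Type*} {T : Set G} {g : ι → G} {c K : ℕ} {b : ℕ → ℕ}

theorem iterate_mem_wordBall_growthBound (β : G →* G)
    (hb : ∀ m, ∀ t ∈ T, (⇑β)^[m] t ∈ wordBall T (b m))
    (hβ : ∀ i, β (g i) ∈ wordBall (Set.range g) c * wordBall T K) (m : ℕ) (i : ι) :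
    (⇑β)^[m] (g i) ∈ wordBall (T ∪ Set.range g) (growthBound c K b m) := by
  induction m generalizing i with
  | zero => exact subset_wordBall_one (Or.inr ⟨i, rfl⟩)
  | succ m ih =>
    -- `ψ` is `β^[m]`, bundled as a monoid hom so that it acts on word balls.
    let ψ : Monoid.End G := (show Monoid.End G from β) ^ m
    have hg : ψ '' Set.range g ⊆ wordBall (T ∪ Set.range g) (growthBound c K b m) := by
      rintro _ ⟨_, ⟨j, rfl⟩, rfl⟩
      exact ih j
    have hT : ψ '' T ⊆ wordBall (T ∪ Set.range g) (b m) := by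
      rintro _ ⟨t, ht, rfl⟩
      exact wordBall_mono Set.subset_union_left le_rfl (hb m t ht)
    have hψ : ψ (β (g i)) ∈ ψ '' wordBall (Set.range g) c * ψ '' wordBall T K :=
      Set.image_mul ψ ▸ Set.mem_image_of_mem ψ (hβ i)
    rw [image_wordBall, image_wordBall] at hψ
    rw [Function.iterate_succ_apply, growthBound, wordBall_add]
    exact Set.mul_subset_mul (wordBall_subset_wordBall_mul hg) (wordBall_subset_wordBall_mul hT)
      hψ

theorem iterate_mul_mem_wordBall (α : G →* G) {N : ℕ} {B : ℕ → ℕ}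
    (hB : ∀ j, ∀ t ∈ T, (⇑α)^[j] t ∈ wordBall T (B j))
    (hα : ∀ i, (⇑α)^[N] (g i) ∈ wordBall (Set.range g) c * wordBall T K) (m : ℕ) :
    ∀ s ∈ T ∪ Set.range g, (⇑α)^[N * m] s ∈
      wordBall (T ∪ Set.range g) (growthBound c K (fun m => B (N * m)) m + B (N * m)) := by
  rintro s (hs | ⟨i, rfl⟩)
  · exact wordBall_mono Set.subset_union_left (Nat.le_add_left _ _) (hB _ s hs)
  · have hBN : ∀ m, ∀ t ∈ T, ((⇑α)^[N])^[m] t ∈ wordBall T (B (N * m)) := fun m t ht =>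
      Function.iterate_mul (⇑α) N m ▸ hB (N * m) t ht
    rw [Function.iterate_mul]
    exact wordBall_mono subset_rfl (Nat.le_add_right _ _)
      (iterate_mem_wordBall_growthBound ((show Monoid.End G from α) ^ N) hBN hα m i)

end Iterate

theorem growthBound_le_mul_pow {c K : ℕ} {b : ℕ → ℕ} {r : ℝ} (hcr : (c : ℝ) < r)
    (hb : ∀ m, (b m : ℝ) ≤ r ^ m) : ∃ E : ℝ, ∀ m, (growthBound c K b m : ℝ) ≤ E * r ^ m := by
  set E : ℝ := 1 + K / (r - c)
  have hKE : (K : ℝ) ≤ E * (r - c) := by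
    rw [add_mul, div_mul_cancel₀ _ (sub_ne_zero.2 hcr.ne')]
    linarith
  have hr : 0 ≤ r := (Nat.cast_nonneg c).trans hcr.le
  refine ⟨E, fun m => ?_⟩
  induction m with
  | zero =>
    have hE : (1 : ℝ) ≤ E := le_add_of_nonneg_right (div_nonneg K.cast_nonneg (sub_nonneg.2 hcr.le))
    simpa [growthBound] using hE
  | succ m ih =>
    calc (growthBound c K b (m + 1) : ℝ) = growthBound c K b m * c + b m * K := by
          simp [growthBound]
      _ ≤ E * r ^ m * c + r ^ m * (E * (r - c)) := by gcongr; exact hb m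
      _ = E * r ^ (m + 1) := by ring

theorem eventually_le_pow_of_tendsto_rpow {x : ℕ → ℝ} {l ρ : ℝ} (hx : ∀ j, 0 ≤ x j)
    (h : Tendsto (fun j : ℕ => x j ^ (1 / (j : ℝ))) atTop (nhds l)) (hlρ : l < ρ) :
    ∀ᶠ j in atTop, x j ≤ ρ ^ j := by
  filter_upwards [h.eventually_lt_const hlρ, eventually_ne_atTop 0] with j hj hj0
  calc x j = (x j ^ (1 / (j : ℝ))) ^ j := by rw [one_div, Real.rpow_inv_natCast_pow (hx j) hj0]
    _ ≤ ρ ^ j := pow_le_pow_left₀ (Real.rpow_nonneg (hx j) _) hj.le j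

theorem le_of_tendsto_rpow_of_frequently_le {x : ℕ → ℝ} {l ρ E : ℝ} (hx : ∀ j, 0 ≤ x j)
    (hρ : 0 ≤ ρ) (h : Tendsto (fun j : ℕ => x j ^ (1 / (j : ℝ))) atTop (nhds l))
    (hfreq : ∃ᶠ j in atTop, x j ≤ E * ρ ^ j) : l ≤ ρ := by
  set E' := max E 1
  have hE' : 0 < E' := zero_lt_one.trans_le (le_max_right _ _)
  have hlim : Tendsto (fun j : ℕ => E' ^ (1 / (j : ℝ)) * ρ) atTop (nhds ρ) := by
    simpa using ((tendsto_const_nhds (x := E')).rpow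
      (tendsto_const_div_atTop_nhds_zero_nat 1) (Or.inl hE'.ne')).mul_const ρ
  refine le_of_tendsto_of_tendsto_of_frequently h hlim ?_
  refine (hfreq.and_eventually (eventually_ne_atTop 0)).mono fun j ⟨hj, hj0⟩ => ?_
  calc x j ^ (1 / (j : ℝ)) ≤ (E' * ρ ^ j) ^ (1 / (j : ℝ)) := by
        gcongr
        · exact hx j
        · exact hj.trans (by gcongr; exact le_max_left _ _)
    _ = E' ^ (1 / (j : ℝ)) * ρ := by
        rw [Real.mul_rpow hE'.le (by positivity), one_div, Real.pow_rpow_inv_natCast hρ hj0]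

theorem eventually_forall_le_pow_mul_and_lt_pow {b c : ℕ → ℝ} {lb lc ρ : ℝ}
    (hb0 : ∀ j, 0 ≤ b j) (hc0 : ∀ j, 0 ≤ c j) (hb1 : b 0 ≤ 1)
    (hb : Tendsto (fun j : ℕ => b j ^ (1 / (j : ℝ))) atTop (nhds lb))
    (hc : Tendsto (fun j : ℕ => c j ^ (1 / (j : ℝ))) atTop (nhds lc)) (hρ : max lb lc < ρ) :
    ∀ᶠ N in atTop, (∀ m, b (N * m) ≤ ρ ^ (N * m)) ∧ c N < ρ ^ N := by
  obtain ⟨ρ₀, hρ₀, hρ₀ρ⟩ := exists_between hρ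
  have hρ₀0 : 0 ≤ ρ₀ :=
    (ge_of_tendsto' hb fun j => Real.rpow_nonneg (hb0 j) _).trans
      ((le_max_left _ _).trans hρ₀.le)
  filter_upwards [eventually_forall_ge_atTop.2
      (eventually_le_pow_of_tendsto_rpow hb0 hb ((le_max_left _ _).trans_lt hρ₀)),
    eventually_le_pow_of_tendsto_rpow hc0 hc ((le_max_right _ _).trans_lt hρ₀),
    eventually_ne_atTop 0] with N hbN hcN hN
  refine ⟨fun m => ?_, hcN.trans_lt (pow_lt_pow_left₀ hρ₀ρ hρ₀0 hN)⟩
  rcases Nat.eq_zero_or_pos m with rfl | hm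
  · simpa using hb1
  · exact (hbN _ (Nat.le_mul_of_pos_right N hm)).trans (pow_le_pow_left₀ hρ₀0 hρ₀ρ.le _)

theorem growth_rate_le_max_sub_quot_general {G : Type*} [Group G] [DecidableEq G]
    (H : Subgroup G) [H.Normal]
    (T : Finset G) (hT : Subgroup.closure (T : Set G) = H)
    (k : ℕ) (g : Fin k → G)
    (hQ : Subgroup.closure ((QuotientGroup.mk : G → G ⧸ H) '' Set.range g) = ⊤)
    (S : Finset G) (hSdef : S = T ∪ Finset.image g Finset.univ)
    (α : G →* G) (hα : ∀ h ∈ H, α h ∈ H)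
    (αbar : G ⧸ H →* G ⧸ H)
    (hbar : ∀ x : G, αbar (QuotientGroup.mk x) = QuotientGroup.mk (α x))
    (L LH LQ : ℝ)
    (hL : Tendsto
      (fun m : ℕ =>
        ((S.sup fun s => wordLength (S : Set G) ((⇑α)^[m] s) : ℕ) : ℝ) ^ (1 / (m : ℝ)))
      atTop (nhds L))
    (hLH : Tendsto
      (fun m : ℕ =>
        ((T.sup fun t => wordLength (T : Set G) ((⇑α)^[m] t) : ℕ) : ℝ) ^ (1 / (m : ℝ)))
      atTop (nhds LH))
    (hLQ : Tendsto
      (fun m : ℕ =>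
        (((Finset.image g Finset.univ).sup fun x =>
            wordLength ((QuotientGroup.mk : G → G ⧸ H) '' Set.range g)
              ((⇑αbar)^[m] (QuotientGroup.mk x)) : ℕ) : ℝ) ^ (1 / (m : ℝ)))
      atTop (nhds LQ)) :
    L ≤ max LH LQ := by
  subst hSdef
  simp only [Finset.coe_union, Finset.coe_image, Finset.coe_univ, Set.image_univ] at hL
  refine le_of_forall_gt_imp_ge_of_dense fun ρ hρ => ?_
  have hB := iterate_mem_wordBall_sup_wordLength α (hT ▸ fun h hh => hα h hh)
  obtain ⟨N, ⟨hBN, hCN⟩, hN⟩ := ((eventually_forall_le_pow_mul_and_lt_pow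
    (fun _ => by positivity) (fun _ => by positivity)
    (by exact_mod_cast sup_wordLength_le fun t ht => subset_wordBall_one ht) hLH hLQ hρ).and
    (eventually_gt_atTop 0)).exists
  obtain ⟨K, hK⟩ := exists_forall_mem_wordBall_mul_wordBall hT
    (X := Set.range g) (x := fun i => (⇑α)^[N] (g i)) fun i => by
      rw [(Function.Semiconj.iterate_right (fun x => (hbar x).symm) N) (g i)]
      exact mem_wordBall_sup_wordLength (F := fun x => (⇑αbar)^[N] (QuotientGroup.mk x))
        (fun _ _ => hQ ▸ Subgroup.mem_top _)
        (Finset.mem_image_of_mem g (Finset.mem_univ i))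
  obtain ⟨E, hE⟩ := growthBound_le_mul_pow (K := K) hCN (by simpa only [pow_mul] using hBN)
  have hρ0 : 0 ≤ ρ :=
    (ge_of_tendsto' hLH fun _ => by positivity).trans ((le_max_left _ _).trans hρ.le)
  refine le_of_tendsto_rpow_of_frequently_le (E := E + 1) (fun _ => by positivity) hρ0 hL
    (frequently_atTop.2 fun m => ⟨N * m, Nat.le_mul_of_pos_left m hN, ?_⟩)
  have hA := sup_wordLength_le fun s (hs : s ∈ T ∪ Finset.image g Finset.univ) =>
    iterate_mul_mem_wordBall α hB hK m s (by simpa using hs)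
  calc _ ≤ (growthBound _ K _ m : ℝ) + _ := by exact_mod_cast hA
    _ ≤ E * (ρ ^ N) ^ m + ρ ^ (N * m) := add_le_add (hE m) (hBN m)
    _ = (E + 1) * ρ ^ (N * m) := by ring

theorem growth_rate_le_max_sub_quot {G : Type*} [Group G] [DecidableEq G]
    (H : Subgroup G) [H.Normal]
    (T : Finset G) (hT : Subgroup.closure (T : Set G) = H)
    (k : ℕ) (g : Fin k → G)
    (hQ : Subgroup.closure ((QuotientGroup.mk : G → G ⧸ H) '' Set.range g) = ⊤)
    (S : Finset G) (hSdef : S = T ∪ Finset.image g Finset.univ)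
    (hS : Subgroup.closure (S : Set G) = ⊤)
    (α : G →* G) (hα : ∀ h ∈ H, α h ∈ H)
    (αbar : G ⧸ H →* G ⧸ H)
    (hbar : ∀ x : G, αbar (QuotientGroup.mk x) = QuotientGroup.mk (α x))
    (L LH LQ : ℝ)
    (hL : Tendsto
      (fun m : ℕ =>
        ((S.sup fun s => wordLength (S : Set G) ((⇑α)^[m] s) : ℕ) : ℝ) ^ (1 / (m : ℝ)))
      atTop (nhds L))
    (hLH : Tendsto
      (fun m : ℕ =>
        ((T.sup fun t => wordLength (T : Set G) ((⇑α)^[m] t) : ℕ) : ℝ) ^ (1 / (m : ℝ)))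
      atTop (nhds LH))
    (hLQ : Tendsto
      (fun m : ℕ =>
        (((Finset.image g Finset.univ).sup fun x =>
            wordLength ((QuotientGroup.mk : G → G ⧸ H) '' Set.range g)
              ((⇑αbar)^[m] (QuotientGroup.mk x)) : ℕ) : ℝ) ^ (1 / (m : ℝ)))
      atTop (nhds LQ)) :
    L ≤ max LH LQ :=
  growth_rate_le_max_sub_quot_general H T hT k g hQ S hSdef α hα αbar hbar L LH LQ hL hLH hLQ
end

section
/- Let A and B be finitely generated groups and Γ = A ∗ B their free product, with generating set the union of finite generating sets of A and B. If α is an endomorphism of Γ with α(A) ⊆ A and α(B) ⊆ B, then GR(α on Γ) = max{ GR(α restricted to A), GR(α restricted to B) }. -/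
/-!
Projecting a word of `A ∗ B` to `A` kills the letters from `B` and keeps those from `A`, so a
free factor sits isometrically in the free product: `|inl a| = |a|_A` and `|inr b| = |b|_B`.
Since `α` preserves the factors, `αᵐ` of a generator of `A` is `inl (αAᵐ a)`, and the growth
sequence of `α` is, term by term, the maximum of those of `αA` and `αB`.
-/

open Filter

section WordLength

variable {G H : Type*} [Group G] [Group H] {S : Set G} {T : Set H} {g : G}

lemma wordLength_le_length {l : List G} (hl : ∀ x ∈ l, x ∈ S ∨ x⁻¹ ∈ S) (hprod : l.prod = g) :
    wordLength S g ≤ l.length :=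
  Nat.sInf_le ⟨l, rfl, hl, hprod⟩

lemma exists_word_length_eq_wordLength (hg : g ∈ Subgroup.closure S) :
    ∃ l : List G, l.length = wordLength S g ∧ (∀ x ∈ l, x ∈ S ∨ x⁻¹ ∈ S) ∧ l.prod = g := by
  rw [← Subgroup.mem_toSubmonoid, Subgroup.closure_toSubmonoid] at hg
  obtain ⟨l, hl, hprod⟩ := Submonoid.exists_list_of_mem_closure hg
  exact Nat.sInf_mem (s := {n | ∃ l : List G, l.length = n ∧ _ ∧ l.prod = g})
    ⟨l.length, l, rfl, hl, hprod⟩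

lemma wordLength_le_length_of_forall_or_eq_one {l : List G}
    (hl : ∀ x ∈ l, x ∈ S ∨ x⁻¹ ∈ S ∨ x = 1) (hprod : l.prod = g) :
    wordLength S g ≤ l.length := by
  classical
  calc wordLength S g ≤ (l.filter (· != 1)).length := by
        refine wordLength_le_length (fun x hx => ?_) (by rw [List.prod_filter_bne_one, hprod])
        obtain ⟨hx, hx1⟩ := List.mem_filter.mp hx
        rcases hl x hx with h | h | rfl
        · exact Or.inl h
        · exact Or.inr h
        · simp at hx1
    _ ≤ l.length := List.length_filter_le _ _

lemma wordLength_map_le (f : G →* H) (hf : ∀ s ∈ S, f s ∈ T ∨ f s = 1)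
    (hg : g ∈ Subgroup.closure S) : wordLength T (f g) ≤ wordLength S g := by
  obtain ⟨l, hlen, hl, rfl⟩ := exists_word_length_eq_wordLength hg
  calc wordLength T (f l.prod) ≤ (l.map f).length :=
        wordLength_le_length_of_forall_or_eq_one (fun y hy => ?_) (map_list_prod f l).symm
    _ = wordLength S l.prod := by rw [List.length_map, hlen]
  obtain ⟨x, hx, rfl⟩ := List.mem_map.mp hy
  rcases hl x hx with hx | hx
  · exact (hf x hx).imp_right Or.inr
  · rcases hf _ hx with h | h <;> rw [map_inv] at h
    · exact Or.inr (Or.inl h)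
    · exact Or.inr (Or.inr (inv_eq_one.mp h))

lemma wordLength_eq_of_leftInverse (i : G →* H) (p : H →* G)
    (hpi : Function.LeftInverse p i) (hi : ∀ s ∈ S, i s ∈ T) (hp : ∀ t ∈ T, p t ∈ S ∨ p t = 1)
    (hg : g ∈ Subgroup.closure S) : wordLength T (i g) = wordLength S g := by
  refine le_antisymm (wordLength_map_le i (fun s hs => Or.inl (hi s hs)) hg) ?_
  have hig : i g ∈ Subgroup.closure T := by
    refine Subgroup.closure_mono ?_ (MonoidHom.map_closure i S ▸ Subgroup.mem_map_of_mem i hg)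
    rintro _ ⟨s, hs, rfl⟩
    exact hi s hs
  simpa only [hpi g] using wordLength_map_le p hp hig

end WordLength

section Coprod

open Monoid.Coprod

variable {A B : Type*} [Group A] [Group B] {SA : Set A} {SB : Set B}

lemma wordLength_coprod_inl {a : A} (ha : a ∈ Subgroup.closure SA) :
    wordLength (inl '' SA ∪ inr '' SB) (inl a : Monoid.Coprod A B) = wordLength SA a := by
  refine wordLength_eq_of_leftInverse (H := Monoid.Coprod A B) inl fst fst_apply_inl
    (fun s hs => Or.inl ⟨s, hs, rfl⟩) ?_ ha
  rintro _ (⟨s, hs, rfl⟩ | ⟨t, -, rfl⟩)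
  · exact Or.inl (by simpa using hs)
  · exact Or.inr (fst_apply_inr t)

lemma wordLength_coprod_inr {b : B} (hb : b ∈ Subgroup.closure SB) :
    wordLength (inl '' SA ∪ inr '' SB) (inr b : Monoid.Coprod A B) = wordLength SB b := by
  refine wordLength_eq_of_leftInverse (H := Monoid.Coprod A B) inr snd snd_apply_inr
    (fun s hs => Or.inr ⟨s, hs, rfl⟩) ?_ hb
  rintro _ (⟨s, -, rfl⟩ | ⟨t, ht, rfl⟩)
  · exact Or.inr (snd_apply_inl s)
  · exact Or.inl (by simpa using ht)

end Coprod

theorem growth_rate_free_product {A B : Type*} [Group A] [Group B]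
    (SA : Finset A) (SB : Finset B)
    (hSA : Subgroup.closure (SA : Set A) = ⊤)
    (hSB : Subgroup.closure (SB : Set B) = ⊤)
    (α : Monoid.Coprod A B →* Monoid.Coprod A B) (αA : A →* A) (αB : B →* B)
    (hA : ∀ a : A, α (Monoid.Coprod.inl a) = Monoid.Coprod.inl (αA a))
    (hB : ∀ b : B, α (Monoid.Coprod.inr b) = Monoid.Coprod.inr (αB b))
    (L LA LB : ℝ)
    (hL : Tendsto
      (fun m : ℕ =>
        ((max (SA.sup fun a =>
              wordLength ((Monoid.Coprod.inl '' (SA : Set A)) ∪ (Monoid.Coprod.inr '' (SB : Set B)))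
                ((⇑α)^[m] (Monoid.Coprod.inl a)))
            (SB.sup fun b =>
              wordLength ((Monoid.Coprod.inl '' (SA : Set A)) ∪ (Monoid.Coprod.inr '' (SB : Set B)))
                ((⇑α)^[m] (Monoid.Coprod.inr b))) : ℕ) : ℝ) ^ (1 / (m : ℝ)))
      atTop (nhds L))
    (hLA : Tendsto
      (fun m : ℕ =>
        ((SA.sup fun a => wordLength (SA : Set A) ((⇑αA)^[m] a) : ℕ) : ℝ) ^ (1 / (m : ℝ)))
      atTop (nhds LA))
    (hLB : Tendsto
      (fun m : ℕ =>
        ((SB.sup fun b => wordLength (SB : Set B) ((⇑αB)^[m] b) : ℕ) : ℝ) ^ (1 / (m : ℝ)))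
      atTop (nhds LB)) :
    L = max LA LB := by
  have hiterA (m : ℕ) (a : A) : (⇑α)^[m] (Monoid.Coprod.inl a) = Monoid.Coprod.inl ((⇑αA)^[m] a) :=
    (Function.Semiconj.iterate_right (fun a => (hA a).symm) m a).symm
  have hiterB (m : ℕ) (b : B) : (⇑α)^[m] (Monoid.Coprod.inr b) = Monoid.Coprod.inr ((⇑αB)^[m] b) :=
    (Function.Semiconj.iterate_right (fun b => (hB b).symm) m b).symm
  have hlenA (a : A) := wordLength_coprod_inl (SB := (SB : Set B)) (hSA ▸ Subgroup.mem_top a)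
  have hlenB (b : B) := wordLength_coprod_inr (SA := (SA : Set A)) (hSB ▸ Subgroup.mem_top b)
  refine tendsto_nhds_unique (hL.congr fun m => ?_) (hLA.max hLB)
  simp only [hiterA, hiterB, hlenA, hlenB, Nat.cast_max]
  exact Real.rpow_max (by positivity) (by positivity) (by positivity)
end
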